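/- Let n ≥ 2 and let P = |L_1⟩⟨L_1| + |L_2⟩⟨L_2| be the projector of a two-dimensional permutation-invariant n-qubit quantum code of minimum distance d ≥ 2 (i.e., for every Pauli E ∈ G_n with wt(E) ≤ 1 there is g_E ∈ ℂ with PEP = g_E P), whose orthonormal codewords have nonnegative real coefficients in the Dicke basis. Then tr((X⊗X⊗I^{⊗(n−2)}) P) > 0. -/

import Mathlib

open Matrix BigOperators

/-- The single-qubit Pauli matrices `I, X, Y, Z`, indexed by `Fin 4`. -/
noncomputable def pauli1 (k : Fin 4) : Matrix (Fin 2) (Fin 2) ℂ :=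
  if k = 0 then 1
  else if k = 1 then !![0, 1; 1, 0]
  else if k = 2 then !![0, -Complex.I; Complex.I, 0]
  else !![1, 0; 0, -1]

/-- The `n`-qubit Pauli operator labelled by `p : Fin n → Fin 4`, i.e. the tensor product
`pauli1 (p 0) ⊗ ⋯ ⊗ pauli1 (p (n-1))`, acting on `(ℂ²)^{⊗n} ≅ ℂ^{2^n}` (whose standard
basis is indexed by `Fin n → Fin 2`).  The map `p ↦ PauliOp n p` enumerates `G_n`. -/
noncomputable def PauliOp (n : ℕ) (p : Fin n → Fin 4) :
    Matrix (Fin n → Fin 2) (Fin n → Fin 2) ℂ :=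
  fun v w => ∏ i, pauli1 (p i) (v i) (w i)

/-- The weight of a Pauli label: the number of non-identity tensor factors. -/
def pwt {n : ℕ} (p : Fin n → Fin 4) : ℕ :=
  (Finset.univ.filter fun i => p i ≠ 0).card

/-- The unitary qubit-permutation operator associated with `π ∈ S_n`, acting on
`(ℂ²)^{⊗n}` by permuting the tensor factors. -/
noncomputable def permMat (n : ℕ) (π : Equiv.Perm (Fin n)) :
    Matrix (Fin n → Fin 2) (Fin n → Fin 2) ℂ :=
  fun v w => if w = v ∘ π then 1 else 0

/-- The Pauli label of `σ_{x,y,z,n} = X^{⊗x} ⊗ Y^{⊗y} ⊗ Z^{⊗z} ⊗ I^{⊗(n-x-y-z)}`. -/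
def sigmaLabel (n x y z : ℕ) : Fin n → Fin 4 :=
  fun i => if (i : ℕ) < x then 1
    else if (i : ℕ) < x + y then 2
    else if (i : ℕ) < x + y + z then 3
    else 0

/-- The Dicke state `|D^n_w⟩ = C(n,w)^{-1/2} Σ_{wt(x)=w} |x⟩`, as a vector on
`(ℂ²)^{⊗n}`. -/
noncomputable def dicke (n w : ℕ) : (Fin n → Fin 2) → ℂ :=
  fun v => if (Finset.univ.filter fun i => v i = 1).card = w
    then ((Real.sqrt (n.choose w) : ℂ))⁻¹ else 0

def flp : Fin 2 → Fin 2 := fun a => if a = 0 then 1 else 0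

lemma pauliI (a b : Fin 2) : pauli1 0 a b = if b = a then 1 else 0 := by
  simp [pauli1, Matrix.one_apply, eq_comm]

lemma pauli1_one : pauli1 1 = !![0, 1; 1, 0] := by
  rw [pauli1, if_neg (by decide), if_pos rfl]

lemma pauli1_three : pauli1 3 = !![1, 0; 0, -1] := by
  rw [pauli1, if_neg (by decide), if_neg (by decide), if_neg (by decide)]

lemma pauliX (a b : Fin 2) : pauli1 1 a b = if b = flp a then 1 else 0 := by
  rw [pauli1_one]; fin_cases a <;> fin_cases b <;> norm_num [flp]

lemma pauliZ3 (a b : Fin 2) : pauli1 3 a b = if b = a then (if a = 0 then 1 else -1) else 0 := by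
  rw [pauli1_three]; fin_cases a <;> fin_cases b <;> norm_num

def wt {n : ℕ} (v : Fin n → Fin 2) : ℕ := (Finset.univ.filter fun i => v i = 1).card

lemma wt_le {n : ℕ} (v : Fin n → Fin 2) : wt v ≤ n := by
  classical
  calc wt v ≤ (Finset.univ : Finset (Fin n)).card := Finset.card_filter_le _ _
  _ = n := by simp

def wtF {n : ℕ} (v : Fin n → Fin 2) : Fin (n+1) := ⟨wt v, Nat.lt_succ_of_le (wt_le v)⟩

lemma wt_pred {n : ℕ} (q : ℕ → Prop) [DecidablePred q] (v : Fin n → Fin 2)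
    (hv : ∀ i : Fin n, v i = 1 ↔ q i.val) :
    wt v = ((Finset.range n).filter q).card := by
  classical
  unfold wt
  rw [show (Finset.univ.filter fun i : Fin n => v i = 1)
      = Finset.univ.filter (fun i : Fin n => q i.val) by
    ext i; simp [hv i]]
  apply Finset.card_bij (fun i _ => i.val)
  · intro i hi
    simp only [Finset.mem_filter, Finset.mem_univ, true_and] at hi
    simp only [Finset.mem_filter, Finset.mem_range]
    exact ⟨i.isLt, hi⟩
  · intro i _ j _ h; exact Fin.ext h
  · intro i hi
    simp only [Finset.mem_filter, Finset.mem_range] at hi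
    refine ⟨⟨i, hi.1⟩, ?_, rfl⟩
    simp only [Finset.mem_filter, Finset.mem_univ, true_and]
    exact hi.2

lemma fin2_ne_one {x : Fin 2} (h : x ≠ 1) : x = 0 := by omega

lemma wt_eq_zero {n : ℕ} (v : Fin n → Fin 2) (h : wt v = 0) : v = fun _ => 0 := by
  classical
  funext i
  apply fin2_ne_one
  intro hv
  have h2 : i ∈ (Finset.univ.filter fun i => v i = 1) := by simp [hv]
  rw [Finset.card_eq_zero.mp h] at h2
  exact absurd h2 (Finset.notMem_empty i)

lemma wt_eq_n {n : ℕ} (v : Fin n → Fin 2) (h : wt v = n) : v = fun _ => 1 := by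
  classical
  have huniv : (Finset.univ.filter fun i => v i = 1) = Finset.univ := by
    apply Finset.eq_univ_of_card; simpa [wt] using h
  funext i
  have h2 : i ∈ Finset.univ.filter fun i => v i = 1 := by rw [huniv]; exact Finset.mem_univ i
  simpa using h2

def bflip {n : ℕ} (v : Fin n → Fin 2) : Fin n → Fin 2 :=
  fun i => if (i : ℕ) < 2 then flp (v i) else v i

lemma sigmaLabel200 (n : ℕ) (i : Fin n) :
    sigmaLabel n 2 0 0 i = if (i : ℕ) < 2 then 1 else 0 := by
  by_cases h : (i : ℕ) < 2 <;> simp [sigmaLabel, h]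

lemma XXI_apply (n : ℕ) (v w : Fin n → Fin 2) :
    PauliOp n (sigmaLabel n 2 0 0) v w = if w = bflip v then 1 else 0 := by
  unfold PauliOp
  have key : ∀ i : Fin n, pauli1 (sigmaLabel n 2 0 0 i) (v i) (w i)
      = if w i = bflip v i then 1 else 0 := by
    intro i
    rw [sigmaLabel200]
    by_cases h : (i : ℕ) < 2 <;> simp [bflip, h, pauliX, pauliI]
  rw [Finset.prod_congr rfl fun i _ => key i, Finset.prod_boole]
  congr 1
  simp [funext_iff]

lemma ZOp_apply (n : ℕ) (hn : 0 < n) (u t : Fin n → Fin 2) :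
    PauliOp n (fun i => if (i : ℕ) = 0 then 3 else 0) u t
      = if t = u then (if u ⟨0, hn⟩ = 0 then 1 else -1) else 0 := by
  unfold PauliOp
  by_cases h : t = u
  · subst h
    rw [if_pos rfl, Finset.prod_eq_single (⟨0, hn⟩ : Fin n)]
    · simp [pauliZ3]
    · intro i _ hne
      have hi0 : (i : ℕ) ≠ 0 := fun hh => hne (Fin.ext hh)
      simp [hi0, pauliI]
    · simp
  · obtain ⟨i, hi⟩ : ∃ i, t i ≠ u i := by
      by_contra hc; push_neg at hc; exact h (funext hc)
    rw [if_neg h]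
    apply Finset.prod_eq_zero (Finset.mem_univ i)
    by_cases h0 : (i : ℕ) = 0 <;> simp [h0, pauliZ3, pauliI, Ne.symm hi, hi]

lemma pwt_Z (n : ℕ) (hn : 0 < n) :
    pwt (fun i : Fin n => if (i : ℕ) = 0 then (3 : Fin 4) else 0) ≤ 1 := by
  classical
  unfold pwt
  have hsub : (Finset.univ.filter fun i : Fin n =>
      (if (i : ℕ) = 0 then (3 : Fin 4) else 0) ≠ 0) ⊆ {⟨0, hn⟩} := by
    intro i hi
    simp only [Finset.mem_filter, Finset.mem_univ, true_and] at hi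
    by_cases h0 : (i : ℕ) = 0
    · simp [show i = ⟨0, hn⟩ from Fin.ext (by simpa using h0)]
    · simp [h0] at hi
  calc _ ≤ ({⟨0, hn⟩} : Finset (Fin n)).card := Finset.card_le_card hsub
  _ = 1 := Finset.card_singleton _

lemma filter_card_mid (n w : ℕ) (h1 : 1 ≤ w) (h2 : w < n) (c : ℕ) (hc : c ≤ 1) :
    ((Finset.range n).filter (fun m => m ≠ c ∧ m ≤ w)).card = w := by
  have he : (Finset.range n).filter (fun m => m ≠ c ∧ m ≤ w)
      = (Finset.range (w+1)).erase c := by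
    ext m
    simp only [Finset.mem_filter, Finset.mem_range, Finset.mem_erase]
    omega
  rw [he, Finset.card_erase_of_mem (by simp; omega), Finset.card_range]
  omega

lemma exists_mid (n w : ℕ) (h1 : 1 ≤ w) (h2 : w < n) :
    ∃ v : Fin n → Fin 2, wt v = w ∧ wt (bflip v) = w := by
  refine ⟨fun i => if (i : ℕ) = 1 then 0 else if (i : ℕ) ≤ w then 1 else 0, ?_, ?_⟩
  · rw [wt_pred (fun m => m ≠ 1 ∧ m ≤ w)]
    · exact filter_card_mid n w h1 h2 1 le_rfl
    · intro i
      by_cases hA : (i : ℕ) = 1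
      · simp [hA]
      · by_cases hB : (i : ℕ) ≤ w <;> simp [hA, hB]
  · have hb : bflip (fun i : Fin n => if (i : ℕ) = 1 then 0 else if (i : ℕ) ≤ w then 1 else 0)
        = fun i : Fin n => if (i : ℕ) = 0 then 0 else if (i : ℕ) ≤ w then 1 else 0 := by
      funext i
      by_cases h0 : (i : ℕ) = 0
      · simp [bflip, flp, h0, h1]
      · by_cases hA : (i : ℕ) = 1
        · simp [bflip, flp, h0, hA, h1]
        · have hlt : ¬ ((i : ℕ) < 2) := by omega
          simp [bflip, hlt, hA, h0]
    rw [hb, wt_pred (fun m => m ≠ 0 ∧ m ≤ w)]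
    · exact filter_card_mid n w h1 h2 0 (by omega)
    · intro i
      by_cases hA : (i : ℕ) = 0
      · simp [hA]
      · by_cases hB : (i : ℕ) ≤ w <;> simp [hA, hB]

lemma two_dim_struct (p0 p1 q0 q1 : ℝ) (hp0 : 0 ≤ p0) (hp1 : 0 ≤ p1)
    (hq0 : 0 ≤ q0) (hq1 : 0 ≤ q1)
    (h00 : p0 * p0 + q0 * q0 = 1) (h11 : p1 * p1 + q1 * q1 = 1)
    (h01 : p0 * p1 + q0 * q1 = 0) :
    p0 * p0 + p1 * p1 = 1 ∧ q0 * q0 + q1 * q1 = 1 ∧ p0 * q0 + p1 * q1 = 0 := by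
  have hA : p0 * p1 = 0 := by nlinarith [mul_nonneg hp0 hp1, mul_nonneg hq0 hq1]
  have hB : q0 * q1 = 0 := by nlinarith [mul_nonneg hp0 hp1, mul_nonneg hq0 hq1]
  rcases mul_eq_zero.mp hA with h | h
  · have hq0' : q0 = 1 := by nlinarith
    have hq1' : q1 = 0 := by nlinarith
    have hp1' : p1 = 1 := by nlinarith
    refine ⟨by nlinarith, by nlinarith, by nlinarith⟩
  · have hq1' : q1 = 1 := by nlinarith
    have hq0' : q0 = 0 := by nlinarith
    have hp0' : p0 = 1 := by nlinarith
    refine ⟨by nlinarith, by nlinarith, by nlinarith⟩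

lemma dicke_val (n w : ℕ) (v : Fin n → Fin 2) :
    dicke n w v = ((if wt v = w then (Real.sqrt (n.choose w))⁻¹ else 0 : ℝ) : ℂ) := by
  unfold dicke wt
  split_ifs <;> simp

/-- Let `n ≥ 2` and let `P = |L₁⟩⟨L₁| + |L₂⟩⟨L₂|` be the projector of a
two-dimensional permutation-invariant `n`-qubit code of minimum distance `≥ 2` (i.e.
`P E P = g_E • P` for every Pauli `E` of weight `≤ 1`), whose orthonormal codewords have
nonnegative real Dicke coefficients.  Then `tr((X ⊗ X ⊗ I^{⊗(n-2)}) P) > 0`. -/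
theorem stmt17 (n : ℕ) (hn : 2 ≤ n)
    (a : Fin 2 → Fin (n + 1) → ℝ) (ha : ∀ j w, 0 ≤ a j w)
    (L : Fin 2 → (Fin n → Fin 2) → ℂ)
    (hL : ∀ j, L j = fun v => ∑ w : Fin (n + 1), (a j w : ℂ) * dicke n (w : ℕ) v)
    (horth : ∀ j k, (∑ v, star (L j v) * L k v) = if j = k then (1 : ℂ) else 0)
    (P : Matrix (Fin n → Fin 2) (Fin n → Fin 2) ℂ)
    (hP : P = fun v w => ∑ j, L j v * star (L j w))
    (hperm : ∀ π : Equiv.Perm (Fin n), permMat n π * P = P ∧ P * permMat n π = P)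
    (hdist : ∀ p : Fin n → Fin 4, pwt p ≤ 1 → ∃ g : ℂ, P * PauliOp n p * P = g • P) :
    0 < (Matrix.trace (PauliOp n (sigmaLabel n 2 0 0) * P)).re := by
  classical
  have hn0 : 0 < n := by omega
  set Z : Fin n → Fin 2 := fun _ => 0 with hZdef
  set O : Fin n → Fin 2 := fun _ => 1 with hOdef
  set b : Fin 2 → Fin (n+1) → ℝ := fun j w => a j w * (Real.sqrt (n.choose (w : ℕ)))⁻¹
    with hbdef
  have hbnn : ∀ j w, 0 ≤ b j w := fun j w =>
    mul_nonneg (ha j w) (inv_nonneg.mpr (Real.sqrt_nonneg _))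
  -- L in terms of b
  have hLv : ∀ j v, L j v = ((b j (wtF v) : ℝ) : ℂ) := by
    intro j v
    simp only [hL]
    rw [Finset.sum_eq_single (wtF v)]
    · rw [dicke_val]
      have hcond : wt v = ((wtF v : Fin (n+1)) : ℕ) := rfl
      rw [if_pos hcond, hbdef]
      push_cast
      ring
    · intro w _ hw
      rw [dicke_val, if_neg, Complex.ofReal_zero, mul_zero]
      exact fun hcontr => hw (Fin.ext hcontr.symm)
    · exact fun h => absurd (Finset.mem_univ _) h
  -- P entries are real
  have hPreal : ∀ v w, P v w = ((∑ j, b j (wtF v) * b j (wtF w) : ℝ) : ℂ) := by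
    intro v w
    simp only [hP]
    rw [Complex.ofReal_sum]
    refine Finset.sum_congr rfl fun j _ => ?_
    rw [hLv j v, hLv j w]
    simp [Complex.star_def, Complex.conj_ofReal, ← Complex.ofReal_mul]
  -- trace formula
  have htr : (Matrix.trace (PauliOp n (sigmaLabel n 2 0 0) * P))
      = ((∑ v, ∑ j, b j (wtF (bflip v)) * b j (wtF v) : ℝ) : ℂ) := by
    rw [Matrix.trace]
    simp only [Matrix.diag, Matrix.mul_apply, XXI_apply, ite_mul, one_mul, zero_mul,
      Finset.sum_ite_eq', Finset.mem_univ, if_true]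
    rw [Complex.ofReal_sum]
    exact Finset.sum_congr rfl fun v _ => hPreal (bflip v) v
  rw [htr, Complex.ofReal_re]
  by_contra hneg
  push_neg at hneg
  have hnn2 : ∀ v : Fin n → Fin 2, v ∈ (Finset.univ : Finset _) →
      0 ≤ ∑ j, b j (wtF (bflip v)) * b j (wtF v) := fun v _ =>
    Finset.sum_nonneg fun j _ => mul_nonneg (hbnn _ _) (hbnn _ _)
  have hS0 : (∑ v, ∑ j, b j (wtF (bflip v)) * b j (wtF v)) = 0 :=
    le_antisymm hneg (Finset.sum_nonneg hnn2)
  have hterm : ∀ v (j : Fin 2), b j (wtF (bflip v)) * b j (wtF v) = 0 := by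
    intro v j
    have h1 := (Finset.sum_eq_zero_iff_of_nonneg hnn2).mp hS0 v (Finset.mem_univ v)
    exact (Finset.sum_eq_zero_iff_of_nonneg
      (fun j _ => mul_nonneg (hbnn _ _) (hbnn _ _))).mp h1 j (Finset.mem_univ j)
  -- middle coefficients vanish
  have hmid : ∀ (j : Fin 2) (w : Fin (n+1)), 1 ≤ (w : ℕ) → (w : ℕ) < n → b j w = 0 := by
    intro j w hw1 hw2
    obtain ⟨v, hv1, hv2⟩ := exists_mid n w hw1 hw2
    have h := hterm v j
    rw [show wtF (bflip v) = w from Fin.ext hv2, show wtF v = w from Fin.ext hv1] at h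
    exact mul_self_eq_zero.mp h
  have hLmid : ∀ (j : Fin 2) v, v ≠ Z → v ≠ O → L j v = 0 := by
    intro j v hvZ hvO
    rw [hLv]
    have h1 : 1 ≤ wt v := by
      rcases Nat.eq_zero_or_pos (wt v) with h | h
      · exact absurd (wt_eq_zero v h) hvZ
      · exact h
    have h2 : wt v < n := lt_of_le_of_ne (wt_le v) fun h => hvO (wt_eq_n v h)
    rw [hmid j (wtF v) h1 h2]
    simp
  have hZO : Z ≠ O := by
    intro h
    have := congrFun h ⟨0, hn0⟩
    simp [hZdef, hOdef] at this
  -- orthonormality in terms of b at Z and O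
  have horth' : ∀ j k : Fin 2,
      b j (wtF Z) * b k (wtF Z) + b j (wtF O) * b k (wtF O)
        = if j = k then (1 : ℝ) else 0 := by
    intro j k
    have h := horth j k
    have hsum : (∑ v, star (L j v) * L k v)
        = star (L j Z) * L k Z + star (L j O) * L k O := by
      rw [← Finset.sum_subset (Finset.subset_univ ({Z, O} : Finset _))]
      · rw [Finset.sum_pair hZO]
      · intro v _ hv
        simp only [Finset.mem_insert, Finset.mem_singleton] at hv
        push_neg at hv
        rw [hLmid k v hv.1 hv.2, mul_zero]
    rw [hsum, hLv j Z, hLv k Z, hLv j O, hLv k O] at h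
    simp only [Complex.star_def, Complex.conj_ofReal, ← Complex.ofReal_mul,
      ← Complex.ofReal_add] at h
    by_cases hjk : j = k
    · rw [if_pos hjk] at h ⊢; exact_mod_cast h
    · rw [if_neg hjk] at h ⊢; exact_mod_cast h
  have h00 := horth' 0 0
  have h11 := horth' 1 1
  have h01 := horth' 0 1
  rw [if_pos rfl] at h00 h11
  rw [if_neg (by decide)] at h01
  have hfacts := two_dim_struct (b 0 (wtF Z)) (b 1 (wtF Z)) (b 0 (wtF O)) (b 1 (wtF O))
    (hbnn 0 (wtF Z)) (hbnn 1 (wtF Z)) (hbnn 0 (wtF O)) (hbnn 1 (wtF O)) h00 h11 h01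
  have hsymm : ∀ u v, P u v = P v u := by
    intro u v
    rw [hPreal, hPreal]
    norm_cast
    exact Finset.sum_congr rfl fun j _ => mul_comm _ _
  have hrowZ : ∀ u, P Z u = if u = Z then 1 else 0 := by
    intro u
    by_cases h1 : u = Z
    · subst h1
      rw [hPreal, if_pos rfl, Fin.sum_univ_two]
      exact_mod_cast hfacts.1
    · rw [if_neg h1]
      by_cases h2 : u = O
      · subst h2
        rw [hPreal, Fin.sum_univ_two]
        exact_mod_cast hfacts.2.2
      · simp only [hP]
        apply Finset.sum_eq_zero
        intro j _
        rw [hLmid j u h1 h2]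
        simp
  have hrowO : ∀ u, P O u = if u = O then 1 else 0 := by
    intro u
    by_cases h1 : u = O
    · subst h1
      rw [hPreal, if_pos rfl, Fin.sum_univ_two]
      exact_mod_cast hfacts.2.1
    · rw [if_neg h1]
      by_cases h2 : u = Z
      · subst h2
        rw [hsymm, hPreal, Fin.sum_univ_two]
        exact_mod_cast hfacts.2.2
      · simp only [hP]
        apply Finset.sum_eq_zero
        intro j _
        rw [hLmid j u h2 h1]
        simp
  -- distance-1 Pauli Z₁ gives a contradiction
  obtain ⟨g, hg⟩ := hdist (fun i => if (i : ℕ) = 0 then 3 else 0) (pwt_Z n hn0)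
  have hM : ∀ (x : Fin n → Fin 2), (∀ u, P x u = if u = x then 1 else 0) →
      (P * PauliOp n (fun i => if (i : ℕ) = 0 then 3 else 0) * P) x x
        = PauliOp n (fun i => if (i : ℕ) = 0 then 3 else 0) x x := by
    intro x hrow
    rw [Matrix.mul_apply]
    have hPE : ∀ t, (P * PauliOp n (fun i => if (i : ℕ) = 0 then 3 else 0)) x t
        = PauliOp n (fun i => if (i : ℕ) = 0 then 3 else 0) x t := by
      intro t
      rw [Matrix.mul_apply]
      simp only [hrow, ite_mul, one_mul, zero_mul, Finset.sum_ite_eq', Finset.mem_univ,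
        if_true]
    simp only [hPE]
    have hcol : ∀ t, P t x = if t = x then 1 else 0 := fun t => by rw [hsymm]; exact hrow t
    simp only [hcol, mul_ite, mul_one, mul_zero, Finset.sum_ite_eq', Finset.mem_univ,
      if_true]
  have ezz : PauliOp n (fun i => if (i : ℕ) = 0 then 3 else 0) Z Z = 1 := by
    rw [ZOp_apply n hn0, if_pos rfl, if_pos rfl]
  have eoo : PauliOp n (fun i => if (i : ℕ) = 0 then 3 else 0) O O = -1 := by
    rw [ZOp_apply n hn0, if_pos rfl, if_neg (by simp [hOdef])]
  have e1 : (1 : ℂ) = g := by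
    have := Matrix.ext_iff.2 hg Z Z
    rw [hM Z hrowZ, ezz] at this
    rw [this]
    simp [Matrix.smul_apply, hrowZ Z]
  have e2 : (-1 : ℂ) = g := by
    have := Matrix.ext_iff.2 hg O O
    rw [hM O hrowO, eoo] at this
    rw [this]
    simp [Matrix.smul_apply, hrowO O]
  rw [← e1] at e2
  norm_num at e2
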